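/- Let {A_i : i ∈ I} be a family of convex subsets of a Banach space X with 0 ∈ ⋂_i A_i and the closed intersection property. If for some η̂ > 0 one has B_{X*} # cl^{w*}co(⋃_i A_i°) ⊆ cl^{w*}co(⋃_i (A_i° # (1/η̂)·B_{X*})), then ⋂_i (A_i + η̂·B_X) ⊆ closure((⋂_i A_i) + B_X). -/

import Mathlib

open Set Metric
open scoped Pointwise

noncomputable section

/-- The recession cone `0⁺A = {x | A + t • x ⊆ A for all t ≥ 0}`. -/
def recCone {X : Type*} [AddCommGroup X] [Module ℝ X] (A : Set X) : Set X :=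
  {x | ∀ t : ℝ, 0 ≤ t → ∀ a ∈ A, a + t • x ∈ A}

/-- The inverse sum `B₁ # B₂`. -/
def invSum {X : Type*} [AddCommGroup X] [Module ℝ X] (B₁ B₂ : Set X) : Set X :=
  (⋃ t ∈ Set.Ioo (0:ℝ) 1, (t • B₁ ∩ (1 - t) • B₂)) ∪ (B₁ ∩ recCone B₂) ∪ (B₂ ∩ recCone B₁)

/-- The polar `A° = {x* | ⟨x*, x⟩ ≤ 1 ∀ x ∈ A}` of a set in `X`, a subset of the dual. -/
def pol {X : Type*} [NormedAddCommGroup X] [NormedSpace ℝ X] (A : Set X) :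
    Set (X →L[ℝ] ℝ) := {f | ∀ x ∈ A, f x ≤ 1}

/-- The dual cone (negative polar) `A^⊖ = {x* | ⟨x*, x⟩ ≤ 0 ∀ x ∈ A}`. -/
def dCone {X : Type*} [NormedAddCommGroup X] [NormedSpace ℝ X] (A : Set X) :
    Set (X →L[ℝ] ℝ) := {f | ∀ x ∈ A, f x ≤ 0}

/-- The weak* closure of a set of continuous linear functionals. -/
def wcl {X : Type*} [NormedAddCommGroup X] [NormedSpace ℝ X]
    (S : Set (X →L[ℝ] ℝ)) : Set (X →L[ℝ] ℝ) :=
  {f | StrongDual.toWeakDual (𝕜 := ℝ) (E := X) f ∈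
    closure (StrongDual.toWeakDual (𝕜 := ℝ) (E := X) '' S)}

/-- The set of all finite sums `Σ_{i ∈ I₀} x_i` with `x_i ∈ P i`, `I₀ ⊆ I` finite. -/
def finSums {X : Type*} [NormedAddCommGroup X] [NormedSpace ℝ X] {I : Type*}
    (P : I → Set (X →L[ℝ] ℝ)) : Set (X →L[ℝ] ℝ) :=
  {g | ∃ (s : Finset I) (x : I → (X →L[ℝ] ℝ)), (∀ i ∈ s, x i ∈ P i) ∧ g = ∑ i ∈ s, x i}

/-- The extended Jameson property `(G_η)`: every `f` in the weak* closure of the set of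
finite sums of the `P i` is a weak* limit (i.e. lies in the weak* closure) of finite sums
`Σ_{i ∈ s} x_i`, `x_i ∈ P i`, with `Σ_{i ∈ s} ‖x_i‖ ≤ (1/η) ‖f‖`. -/
def propG {X : Type*} [NormedAddCommGroup X] [NormedSpace ℝ X] {I : Type*}
    (P : I → Set (X →L[ℝ] ℝ)) (η : ℝ) : Prop :=
  ∀ f ∈ wcl (finSums P),
    f ∈ wcl {g | ∃ (s : Finset I) (x : I → (X →L[ℝ] ℝ)),
      (∀ i ∈ s, x i ∈ P i) ∧ g = ∑ i ∈ s, x i ∧ ∑ i ∈ s, ‖x i‖ ≤ (1 / η) * ‖f‖}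

/-- The normal cone `N(C, x) = {x* | ⟨x*, c − x⟩ ≤ 0 ∀ c ∈ C}`. -/
def ncone {X : Type*} [NormedAddCommGroup X] [NormedSpace ℝ X] (C : Set X) (x : X) :
    Set (X →L[ℝ] ℝ) := {f | ∀ c ∈ C, f (c - x) ≤ 0}

/-- The conical hull of a convex set `S`: `cone S = {t • s | t ≥ 0, s ∈ S}`. -/
def coneHull {X : Type*} [AddCommGroup X] [Module ℝ X] (S : Set X) : Set X :=
  {y | ∃ t : ℝ, 0 ≤ t ∧ ∃ s ∈ S, y = t • s}

end

/-!
Let `C = ⋂ i, A i` and suppose `x ∈ ⋂ i, (A i + η̂ B_X)` lies outside `closure (C + B_X)`.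
Hahn–Banach separation yields `φ ∈ X*` with `‖φ‖ < 1`, `φ x > 1` and `φ ≤ 1 - ‖φ‖` on `C`, i.e.
`φ / (1 - ‖φ‖) ∈ C°`. The closed intersection property and the bipolar theorem give
`C° ⊆ cl^{w*} co ⋃ i, (A i)°`, so splitting `φ = ‖φ‖ • (φ / ‖φ‖)` and `φ = (1 - ‖φ‖) • (φ / (1 - ‖φ‖))`
shows `φ ∈ B_{X*} # cl^{w*} co ⋃ i, (A i)°`. The hypothesis then puts `φ` in
`cl^{w*} co ⋃ i, ((A i)° # (η̂ B_X)°)`; since an inverse sum of polars lies in the polar of the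
Minkowski sum, this set lies in `(⋂ i, (A i + η̂ B_X))°`, so `φ x ≤ 1`, a contradiction.
-/

lemma zero_mem_recCone {E : Type*} [AddCommGroup E] [Module ℝ E] (K : Set E) :
    (0 : E) ∈ recCone K := fun t _ a ha => by simpa using ha

lemma mem_invSum_unitClosedBall {E : Type*} [NormedAddCommGroup E] [NormedSpace ℝ E]
    {K : Set E} {φ : E} (hφ : ‖φ‖ < 1) (hK : φ ∈ (1 - ‖φ‖) • K) :
    φ ∈ invSum (closedBall 0 1) K := by
  rcases eq_or_ne φ 0 with rfl | hφ0
  · exact Or.inl (Or.inr ⟨mem_closedBall_self zero_le_one, zero_mem_recCone K⟩)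
  · refine Or.inl (Or.inl (mem_iUnion₂.2 ⟨‖φ‖, ⟨norm_pos_iff.2 hφ0, hφ⟩, ?_, hK⟩))
    rw [smul_unitClosedBall_of_nonneg (norm_nonneg φ)]
    exact mem_closedBall_zero_iff.2 le_rfl

section Polar

variable {X : Type*} [NormedAddCommGroup X] [NormedSpace ℝ X]

lemma zero_mem_pol (A : Set X) : (0 : X →L[ℝ] ℝ) ∈ pol A := fun _ _ => zero_le_one

lemma pol_antitone {A B : Set X} (h : A ⊆ B) : pol B ⊆ pol A := fun _ hf x hx => hf x (h hx)

lemma convex_pol (A : Set X) : Convex ℝ (pol A) := by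
  intro f hf g hg a b ha hb hab x hx
  have := add_le_add (mul_le_mul_of_nonneg_left (hf x hx) ha)
    (mul_le_mul_of_nonneg_left (hg x hx) hb)
  simpa [hab] using this

lemma pol_closedBall {r : ℝ} (hr : 0 < r) : pol (closedBall (0 : X) r) = closedBall 0 r⁻¹ := by
  rw [← NormedSpace.polar_closedBall hr]
  ext f
  rw [StrongDual.mem_polar_iff]
  refine ⟨fun hf x hx => abs_le.2 ⟨?_, hf x hx⟩, fun hf x hx => (le_abs_self _).trans (hf x hx)⟩
  have := hf (-x) (by rwa [mem_closedBall_zero_iff, norm_neg, ← mem_closedBall_zero_iff])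
  rw [map_neg] at this
  linarith

lemma norm_le_of_forall_mem_unitClosedBall_apply_le (φ : X →L[ℝ] ℝ) {r : ℝ} (hr : 0 < r)
    (h : ∀ b ∈ closedBall (0 : X) 1, φ b ≤ r) : ‖φ‖ ≤ r := by
  have hφ : r⁻¹ • φ ∈ pol (closedBall (0 : X) 1) := fun b hb => by
    simpa [inv_mul_le_iff₀ hr] using h b hb
  rw [pol_closedBall one_pos, inv_one, mem_closedBall_zero_iff, norm_smul, norm_inv,
    Real.norm_of_nonneg hr.le, inv_mul_le_iff₀ hr, mul_one] at hφ
  exact hφ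

lemma mem_closure_of_forall_mem_pol_apply_le {A : Set X} (hA : Convex ℝ A) (h0 : (0 : X) ∈ A)
    {y : X} (hy : ∀ f ∈ pol A, f y ≤ 1) : y ∈ closure A := by
  by_contra hyA
  obtain ⟨f, u, hfA, hfy⟩ := geometric_hahn_banach_closed_point hA.closure isClosed_closure hyA
  have hu : 0 < u := by simpa using hfA 0 (subset_closure h0)
  have hf : u⁻¹ • f ∈ pol A := fun a ha => by
    simpa [inv_mul_le_iff₀ hu] using (hfA a (subset_closure ha)).le
  have := hy _ hf
  rw [smul_apply, smul_eq_mul, inv_mul_le_iff₀ hu, mul_one] at this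
  linarith

lemma exists_forall_le_one_sub_norm_of_notMem_closure_add_unitClosedBall {C : Set X}
    (hC : Convex ℝ C) (h0 : (0 : X) ∈ C) {x : X} (hx : x ∉ closure (C + closedBall 0 1)) :
    ∃ φ : X →L[ℝ] ℝ, ‖φ‖ < 1 ∧ 1 < φ x ∧ ∀ c ∈ C, φ c ≤ 1 - ‖φ‖ := by
  obtain ⟨f, u, hfu, hux⟩ :=
    geometric_hahn_banach_closed_point (hC.add (convex_closedBall 0 1)).closure isClosed_closure hx
  have hf : ∀ c ∈ C, ∀ b ∈ closedBall (0 : X) 1, f c + f b < u := fun c hc b hb => by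
    simpa using hfu _ (subset_closure (add_mem_add hc hb))
  have hu : 0 < u := by simpa using hf 0 h0 0 (mem_closedBall_self zero_le_one)
  have hnorm : ∀ c ∈ C, ‖f‖ ≤ u - f c := fun c hc =>
    norm_le_of_forall_mem_unitClosedBall_apply_le f
      (by linarith [hf c hc 0 (mem_closedBall_self zero_le_one), map_zero f])
      fun b hb => by linarith [hf c hc b hb]
  obtain ⟨v, huv, hvx⟩ := exists_between hux
  have hv : 0 < v := hu.trans huv
  refine ⟨v⁻¹ • f, ?_, ?_, fun c hc => ?_⟩
  · rw [norm_smul, norm_inv, Real.norm_of_nonneg hv.le, inv_mul_lt_iff₀ hv, mul_one]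
    linarith [hnorm 0 h0, map_zero f]
  · rwa [smul_apply, smul_eq_mul, lt_inv_mul_iff₀ hv, mul_one]
  · have h1 : 1 - ‖v⁻¹ • f‖ = v⁻¹ * (v - ‖f‖) := by
      rw [norm_smul, norm_inv, Real.norm_of_nonneg hv.le]
      field_simp
    rw [h1, smul_apply, smul_eq_mul]
    exact mul_le_mul_of_nonneg_left (by linarith [hnorm c hc]) (inv_nonneg.2 hv.le)

lemma apply_nonpos_of_mem_recCone_pol {A : Set X} {g : X →L[ℝ] ℝ} (hg : g ∈ recCone (pol A))
    {a : X} (ha : a ∈ A) : g a ≤ 0 := by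
  by_contra! hpos
  have := hg (2 / g a) (div_pos two_pos hpos).le 0 (zero_mem_pol A) a ha
  simp [div_mul_cancel₀ _ hpos.ne'] at this

lemma invSum_pol_subset_pol_add (A B : Set X) : invSum (pol A) (pol B) ⊆ pol (A + B) := by
  rintro g ((hg | ⟨hgA, hgB⟩) | ⟨hgB, hgA⟩) _ ⟨a, ha, b, hb, rfl⟩ <;> rw [map_add]
  · obtain ⟨t, ⟨ht0, ht1⟩, ⟨p, hp, hpg⟩, ⟨q, hq, hqg⟩⟩ := mem_iUnion₂.1 hg
    have hga : g a ≤ t := by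
      simpa [← hpg] using mul_le_mul_of_nonneg_left (hp a ha) ht0.le
    have hgb : g b ≤ 1 - t := by
      simpa [← hqg] using mul_le_mul_of_nonneg_left (hq b hb) (sub_nonneg.2 ht1.le)
    linarith
  · linarith [hgA a ha, apply_nonpos_of_mem_recCone_pol hgB hb]
  · linarith [apply_nonpos_of_mem_recCone_pol hgA ha, hgB b hb]

end Polar

section WeakStar

variable {X : Type*} [NormedAddCommGroup X] [NormedSpace ℝ X]

lemma wcl_convexHull_subset_pol {S : Set (X →L[ℝ] ℝ)} {A : Set X} (h : S ⊆ pol A) :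
    wcl (convexHull ℝ S) ⊆ pol A := by
  have hclosed : IsClosed {g : WeakDual ℝ X | ∀ x ∈ A, g x ≤ 1} := by
    simpa only [ofPred_forall] using
      isClosed_biInter fun x (_ : x ∈ A) => isClosed_le (WeakDual.eval_continuous x) continuous_const
  intro f hf
  refine closure_minimal ?_ hclosed hf
  rintro _ ⟨g, hg, rfl⟩
  exact convexHull_min h (convex_pol A) hg

lemma exists_apply_gt_of_notMem_wcl {S : Set (X →L[ℝ] ℝ)} (hS : Convex ℝ S)
    (h0 : (0 : X →L[ℝ] ℝ) ∈ S) {g : X →L[ℝ] ℝ} (hg : g ∉ wcl S) :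
    ∃ y : X, (∀ f ∈ S, f y ≤ 1) ∧ 1 < g y := by
  have : LocallyConvexSpace ℝ (WeakDual ℝ X) := WeakBilin.locallyConvexSpace
  have hK : Convex ℝ (closure (StrongDual.toWeakDual '' S)) :=
    (hS.linear_image StrongDual.toWeakDual.toLinearMap).closure
  obtain ⟨Φ, u, hΦ, hu⟩ := geometric_hahn_banach_closed_point hK isClosed_closure hg
  -- every weak*-continuous functional on `X*` is the evaluation at a point of `X`
  obtain ⟨x₀, rfl⟩ := LinearMap.dualEmbedding_surjective (topDualPairing ℝ X) Φ
  have hS' : ∀ f ∈ S, f x₀ < u := fun f hf => hΦ _ (subset_closure ⟨f, hf, rfl⟩)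
  have hu0 : 0 < u := by simpa using hS' 0 h0
  refine ⟨u⁻¹ • x₀, fun f hf => ?_, ?_⟩
  · rw [map_smul, smul_eq_mul, inv_mul_le_iff₀ hu0, mul_one]
    exact (hS' f hf).le
  · rw [map_smul, smul_eq_mul, lt_inv_mul_iff₀ hu0, mul_one]
    exact hu

lemma pol_iInter_subset_wcl_convexHull_iUnion_pol {I : Type*} [Nonempty I] (A : I → Set X)
    (hconv : ∀ i, Convex ℝ (A i)) (h0 : (0 : X) ∈ ⋂ i, A i)
    (hcip : closure (⋂ i, A i) = ⋂ i, closure (A i)) :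
    pol (⋂ i, A i) ⊆ wcl (convexHull ℝ (⋃ i, pol (A i))) := by
  intro g hg
  by_contra hgn
  obtain ⟨y, hyS, hgy⟩ := exists_apply_gt_of_notMem_wcl (convex_convexHull ℝ _)
    (subset_convexHull ℝ _ (mem_iUnion.2 ⟨Classical.arbitrary I, zero_mem_pol _⟩)) hgn
  have hy : y ∈ closure (⋂ i, A i) := hcip ▸ mem_iInter.2 fun i =>
    mem_closure_of_forall_mem_pol_apply_le (hconv i) (mem_iInter.1 h0 i) fun f hf =>
      hyS f (subset_convexHull ℝ _ (mem_iUnion.2 ⟨i, hf⟩))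
  have hgy' : g y ≤ 1 := closure_minimal hg (isClosed_le g.continuous continuous_const) hy
  exact hgy'.not_gt hgy

end WeakStar

theorem stmt13_general {X : Type*} [NormedAddCommGroup X] [NormedSpace ℝ X]
    {I : Type*} [Nonempty I] (A : I → Set X) (hconv : ∀ i, Convex ℝ (A i))
    (h0 : (0 : X) ∈ ⋂ i, A i)
    (hcip : closure (⋂ i, A i) = ⋂ i, closure (A i))
    (ηhat : ℝ) (hηhat : 0 < ηhat)
    (h : invSum (closedBall (0 : X →L[ℝ] ℝ) 1) (wcl (convexHull ℝ (⋃ i, pol (A i)))) ⊆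
      wcl (convexHull ℝ
        (⋃ i, invSum (pol (A i)) ((1 / ηhat) • closedBall (0 : X →L[ℝ] ℝ) 1)))) :
    (⋂ i, (A i + ηhat • closedBall (0:X) 1)) ⊆
      closure ((⋂ i, A i) + closedBall (0:X) 1) := by
  intro x hx
  by_contra hxn
  obtain ⟨φ, hφ1, hφx, hφC⟩ :=
    exists_forall_le_one_sub_norm_of_notMem_closure_add_unitClosedBall (convex_iInter hconv) h0 hxn
  have hpos : 0 < 1 - ‖φ‖ := sub_pos.2 hφ1
  have hφK : φ ∈ (1 - ‖φ‖) • wcl (convexHull ℝ (⋃ i, pol (A i))) := by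
    rw [mem_smul_set_iff_inv_smul_mem₀ hpos.ne']
    refine pol_iInter_subset_wcl_convexHull_iUnion_pol A hconv h0 hcip fun c hc => ?_
    rw [smul_apply, smul_eq_mul, inv_mul_le_iff₀ hpos, mul_one]
    exact hφC c hc
  have hball : (1 / ηhat) • closedBall (0 : X →L[ℝ] ℝ) 1 = pol (ηhat • closedBall (0 : X) 1) := by
    rw [smul_unitClosedBall_of_nonneg hηhat.le, smul_unitClosedBall_of_nonneg (by positivity),
      pol_closedBall hηhat, one_div]
  have hpol : wcl (convexHull ℝ
      (⋃ i, invSum (pol (A i)) ((1 / ηhat) • closedBall (0 : X →L[ℝ] ℝ) 1))) ⊆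
      pol (⋂ i, (A i + ηhat • closedBall (0 : X) 1)) :=
    wcl_convexHull_subset_pol <| iUnion_subset fun i => hball ▸
      (invSum_pol_subset_pol_add _ _).trans (pol_antitone (iInter_subset _ i))
  exact (hpol (h (mem_invSum_unitClosedBall hφ1 hφK)) x hx).not_gt hφx

theorem stmt13 {X : Type*} [NormedAddCommGroup X] [NormedSpace ℝ X] [CompleteSpace X]
    {I : Type*} [Nonempty I] (A : I → Set X) (hconv : ∀ i, Convex ℝ (A i))
    (h0 : (0 : X) ∈ ⋂ i, A i)
    (hcip : closure (⋂ i, A i) = ⋂ i, closure (A i))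
    (ηhat : ℝ) (hηhat : 0 < ηhat)
    (h : invSum (closedBall (0 : X →L[ℝ] ℝ) 1) (wcl (convexHull ℝ (⋃ i, pol (A i)))) ⊆
      wcl (convexHull ℝ
        (⋃ i, invSum (pol (A i)) ((1 / ηhat) • closedBall (0 : X →L[ℝ] ℝ) 1)))) :
    (⋂ i, (A i + ηhat • closedBall (0:X) 1)) ⊆
      closure ((⋂ i, A i) + closedBall (0:X) 1) :=
  stmt13_general A hconv h0 hcip ηhat hηhat h
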